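/- Let M ≥ 1 be an integer, λ > 1 and 0 < ε < 1 with ε < λ−1 and λ(1−ε)/(1+ε) > 1. Let S be an (M,λ,ε,W_N)-minimizing set and [u] ∈ S. Then for a conjugacy class [u'] ≠ [u], the following are equivalent: (1) [u'] ∈ S; (2) there exist Whitehead moves τ_1, …, τ_k ∈ W_N with k ≤ M such that τ_k···τ_1([u]) = [u'] and, setting [u_0] = [u] and [u_i] = τ_i···τ_1([u]), one has ‖u_{i+1}‖_A ≤ (1+ε)‖u_i‖_A for all i < k. -/

import Mathlib

/-!
A move out of `S` stretches length by at least `λ > 1 + ε`, so a chain of moves each stretching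
by at most `1 + ε` never leaves `S`. Conversely, a peak-reduced chain from `[u]` to `[u'] ∈ S`
stays in `S`, because its lengths are bounded by `max ‖u‖ ‖u'‖ ≤ (1 + ε)‖u‖ < λ(1 - ε)‖u‖`.
Consecutive elements of `S` differ in length by a factor at most `1 + ε`, and by pigeonhole
the chain can be cut down to one visiting each element of `S` once, hence of length `< #S ≤ M`.
-/

/-- `(M,λ,ε,W_N)`-minimizing set, in the abstract model where `G = Out(F_N)`
acts on the set `C` of conjugacy classes, `len = ‖·‖_A`, and `W ⊆ G` is the
set of nontrivial Whitehead moves. -/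
def IsWMinimizingSet {G C : Type*} [Group G] [MulAction G C] (W : Set G)
    (len : C → ℕ) (M : ℕ) (lam eps : ℝ) (S : Finset C) : Prop :=
  (∀ u ∈ S, 0 < len u) ∧
  S.card ≤ M ∧
  (∀ u ∈ S, ∀ u' ∈ S, ∃ φ : G, φ • u = u') ∧
  (∀ u ∈ S, ∀ u' ∈ S,
      (1 - eps) * (len u : ℝ) ≤ (len u' : ℝ) ∧ (len u' : ℝ) ≤ (1 + eps) * (len u : ℝ)) ∧
  (∀ u ∈ S, ∀ τ ∈ W, τ • u ∉ S → lam * (len u : ℝ) ≤ (len (τ • u) : ℝ))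

section Chain

variable {α : Type*} {R : α → α → Prop} {c : ℕ → α} {i j k : ℕ}

/-- Reindexing that makes a chain jump from index `i` to index `j`, cutting out the loop between
them when `c i = c j`. -/
def skipIndex (i j n : ℕ) : ℕ := if n < i then n else n + (j - i)

theorem skipIndex_le (hj : j ≤ k) {n : ℕ} (hn : n ≤ k - (j - i)) : skipIndex i j n ≤ k := by
  unfold skipIndex; split_ifs <;> omega

theorem skipIndex_sub (hj : j ≤ k) : skipIndex i j (k - (j - i)) = k := by
  unfold skipIndex; split_ifs <;> omega

theorem comp_skipIndex_zero (hij : c i = c j) : c (skipIndex i j 0) = c 0 := by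
  unfold skipIndex
  split_ifs with h
  · rfl
  · obtain rfl : i = 0 := by omega
    simp [← hij]

theorem comp_skipIndex_succ (hle : i ≤ j) (hij : c i = c j) (n : ℕ) :
    c (skipIndex i j (n + 1)) = c (if n < i then n + 1 else skipIndex i j n + 1) := by
  rcases lt_trichotomy (n + 1) i with h | rfl | h
  · simp [skipIndex, h, (Nat.lt_succ_self n).trans h]
  · simp [skipIndex, Nat.add_sub_cancel' hle, hij]
  · simp only [skipIndex, show ¬n + 1 < i by omega, show ¬n < i by omega, if_false]
    congr 1
    omega

theorem step_comp_skipIndex (hle : i ≤ j) (hij : c i = c j)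
    (hc : ∀ n < k, R (c n) (c (n + 1))) {n : ℕ} (hn : n < k - (j - i)) :
    R (c (skipIndex i j n)) (c (skipIndex i j (n + 1))) := by
  rw [comp_skipIndex_succ hle hij]
  split_ifs with h
  · simpa [skipIndex, h] using hc n (by omega)
  · exact hc _ (by simp only [skipIndex, h, if_false]; omega)

theorem exists_chain_length_lt_card {S : Finset α} (hc : ∀ n < k, R (c n) (c (n + 1)))
    (hS : ∀ n ≤ k, c n ∈ S) :
    ∃ k' < S.card, ∃ d : ℕ → α, d 0 = c 0 ∧ d k' = c k ∧
      (∀ n < k', R (d n) (d (n + 1))) ∧ ∀ n ≤ k', d n ∈ S := by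
  induction k using Nat.strong_induction_on generalizing c with
  | _ k ih =>
  by_cases hk : k < S.card
  · exact ⟨k, hk, c, rfl, rfl, hc, hS⟩
  obtain ⟨i, hi, j, hj, hne, hcij⟩ := Finset.exists_ne_map_eq_of_card_lt_of_maps_to
    (s := Finset.range (k + 1)) (by simpa using hk)
    (fun n hn => hS n (by simpa [Nat.lt_succ_iff] using hn))
  simp only [Finset.mem_range, Nat.lt_succ_iff] at hi hj
  wlog hij : i < j generalizing i j
  · exact this j i hne.symm hcij.symm hj hi (by omega)
  obtain ⟨k', hk', d, hd0, hdk, hd, hdS⟩ := ih (k - (j - i)) (by omega)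
    (c := c ∘ skipIndex i j) (fun n hn => step_comp_skipIndex hij.le hcij hc hn)
    (fun n hn => hS _ (skipIndex_le hj hn))
  refine ⟨k', hk', d, ?_, ?_, hd, hdS⟩
  · simpa [comp_skipIndex_zero hcij] using hd0
  · simpa [skipIndex_sub hj] using hdk

end Chain

namespace IsWMinimizingSet

variable {G C : Type*} [Group G] [MulAction G C] {W : Set G} {len : C → ℕ} {M : ℕ}
  {lam eps : ℝ} {S : Finset C} {c : ℕ → C} {k : ℕ}

theorem smul_mem_of_len_lt (hS : IsWMinimizingSet W len M lam eps S) {v : C} (hv : v ∈ S)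
    {τ : G} (hτ : τ ∈ W) (h : (len (τ • v) : ℝ) < lam * len v) : τ • v ∈ S := by
  obtain ⟨-, -, -, -, hstretch⟩ := hS
  by_contra hnot
  exact (hstretch v hv τ hτ hnot).not_gt h

theorem chain_mem (hS : IsWMinimizingSet W len M lam eps S) (hc0 : c 0 ∈ S)
    (hc : ∀ n < k, c n ∈ S →
      ∃ τ ∈ W, τ • c n = c (n + 1) ∧ (len (c (n + 1)) : ℝ) < lam * len (c n)) :
    ∀ n ≤ k, c n ∈ S := by
  intro n hn
  induction n with
  | zero => exact hc0
  | succ n ih =>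
    obtain ⟨τ, hτ, hτc, hlt⟩ := hc n hn (ih (by omega))
    rw [← hτc] at hlt ⊢
    exact hS.smul_mem_of_len_lt (ih (by omega)) hτ hlt

theorem mem_of_chain (hS : IsWMinimizingSet W len M lam eps S) (heps : 1 + eps < lam)
    (hc0 : c 0 ∈ S) (hW : ∀ n < k, ∃ τ ∈ W, τ • c n = c (n + 1))
    (hlen : ∀ n < k, (len (c (n + 1)) : ℝ) ≤ (1 + eps) * len (c n)) : c k ∈ S := by
  refine hS.chain_mem hc0 (fun n hn hcn => ?_) k le_rfl
  obtain ⟨τ, hτ, hτc⟩ := hW n hn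
  have hpos : (0 : ℝ) < len (c n) := by exact_mod_cast hS.1 _ hcn
  exact ⟨τ, hτ, hτc, (hlen n hn).trans_lt (by gcongr)⟩

/-- Along a peak-reduced chain the lengths stay below `(1 + ε)‖u‖`, whereas a move leaving `S`
would stretch a length of at least `(1 - ε)‖u‖` by `λ`, and `λ(1 - ε) > 1 + ε`. -/
theorem peak_chain_mem (hS : IsWMinimizingSet W len M lam eps S) (hlam : 0 ≤ lam)
    (hgap : 1 + eps < lam * (1 - eps)) {u u' : C} (hu : u ∈ S) (hu' : u' ∈ S) (hc0 : c 0 = u)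
    (hW : ∀ n < k, ∃ τ ∈ W, τ • c n = c (n + 1))
    (hpeak : ∀ n ≤ k, len (c n) ≤ max (len u) (len u')) : ∀ n ≤ k, c n ∈ S := by
  refine hS.chain_mem (hc0 ▸ hu) (fun n hn hcn => ?_)
  obtain ⟨hpos, -, -, hlen, -⟩ := hS
  obtain ⟨τ, hτ, hτc⟩ := hW n hn
  have hu_pos : (0 : ℝ) < len u := by exact_mod_cast hpos u hu
  have hmax : ((max (len u) (len u') : ℕ) : ℝ) ≤ (1 + eps) * len u := by
    rw [Nat.cast_max]
    exact max_le (hlen u hu u hu).2 (hlen u hu u' hu').2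
  refine ⟨τ, hτ, hτc, ?_⟩
  calc (len (c (n + 1)) : ℝ) ≤ (max (len u) (len u') : ℕ) := by exact_mod_cast hpeak (n + 1) hn
    _ ≤ (1 + eps) * len u := hmax
    _ < lam * ((1 - eps) * len u) := by rw [← mul_assoc]; gcongr
    _ ≤ lam * len (c n) := by gcongr; exact (hlen u hu _ hcn).1

end IsWMinimizingSet

theorem stmt6_general {G C : Type*} [Group G] [MulAction G C] (W : Set G)
    (len : C → ℕ) (M : ℕ) (lam eps : ℝ)
    (hlam : 1 < lam) (heps0 : 0 < eps)
    (heps : eps < lam - 1) (hratio : 1 < lam * (1 - eps) / (1 + eps))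
    (hpeak : ∀ (w : C) (φ : G),
      ∃ (k : ℕ) (c : ℕ → C), c 0 = w ∧ c k = φ • w ∧
        (∀ i < k, ∃ τ ∈ W, τ • c i = c (i + 1)) ∧
        (∀ i ≤ k, len (c i) ≤ max (len w) (len (φ • w))))
    (S : Finset C) (hS : IsWMinimizingSet W len M lam eps S)
    (u : C) (hu : u ∈ S) (u' : C) :
    u' ∈ S ↔
      ∃ k ≤ M, ∃ c : ℕ → C, c 0 = u ∧ c k = u' ∧
        (∀ i < k, ∃ τ ∈ W, τ • c i = c (i + 1)) ∧
        (∀ i < k, (len (c (i + 1)) : ℝ) ≤ (1 + eps) * (len (c i) : ℝ)) := by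
  have hgap : 1 + eps < lam * (1 - eps) := by
    rwa [one_lt_div (by linarith)] at hratio
  obtain ⟨-, hcard, htrans, hlen, -⟩ := id hS
  constructor
  · intro hu'
    obtain ⟨φ, rfl⟩ := htrans u hu u' hu'
    obtain ⟨k, c, hc0, hck, hW, hpk⟩ := hpeak u φ
    have hmem := hS.peak_chain_mem (zero_le_one.trans hlam.le) hgap hu hu' hc0 hW hpk
    obtain ⟨k', hk', d, hd0, hdk, hdW, hdS⟩ :=
      exists_chain_length_lt_card (R := fun v w => ∃ τ ∈ W, τ • v = w) hW hmem
    exact ⟨k', (hk'.trans_le hcard).le, d, hd0.trans hc0, hdk.trans hck, hdW,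
      fun n hn => (hlen _ (hdS n hn.le) _ (hdS (n + 1) hn)).2⟩
  · rintro ⟨k, -, c, hc0, rfl, hW, hlen⟩
    exact hS.mem_of_chain (by linarith) (hc0 ▸ hu) hW hlen

/-- for an `(M,λ,ε,W_N)`-minimizing set `S` (with `0<ε<1`,
`ε<λ-1`, `λ(1-ε)/(1+ε)>1`), `[u] ∈ S` and `[u'] ≠ [u]`, we have `[u'] ∈ S` if
and only if `[u']` is reachable from `[u]` by a chain of at most `M` Whitehead
moves each of which stretches the length by a factor at most `1+ε`.  Peak
reduction is assumed as the hypothesis `hpeak`. -/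
theorem stmt6 {G C : Type*} [Group G] [MulAction G C] (W : Set G)
    (len : C → ℕ) (M : ℕ) (lam eps : ℝ)
    (hM : 1 ≤ M) (hlam : 1 < lam) (heps0 : 0 < eps) (heps1 : eps < 1)
    (heps : eps < lam - 1) (hratio : 1 < lam * (1 - eps) / (1 + eps))
    (hpeak : ∀ (w : C) (φ : G),
      ∃ (k : ℕ) (c : ℕ → C), c 0 = w ∧ c k = φ • w ∧
        (∀ i < k, ∃ τ ∈ W, τ • c i = c (i + 1)) ∧
        (∀ i ≤ k, len (c i) ≤ max (len w) (len (φ • w))))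
    (S : Finset C) (hS : IsWMinimizingSet W len M lam eps S)
    (u : C) (hu : u ∈ S) (u' : C) (hne : u' ≠ u) :
    u' ∈ S ↔
      ∃ k ≤ M, ∃ c : ℕ → C, c 0 = u ∧ c k = u' ∧
        (∀ i < k, ∃ τ ∈ W, τ • c i = c (i + 1)) ∧
        (∀ i < k, (len (c (i + 1)) : ℝ) ≤ (1 + eps) * (len (c i) : ℝ)) :=
  stmt6_general W len M lam eps hlam heps0 heps hratio hpeak S hS u hu u'
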